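/- arXiv:2208.09928 — 3 statements merged into one kernel-verified Lean document; each statement's English description precedes it below -/
import Mathlib

section
/- For every s ∈ ℝ, every integer n ≥ 1, and every integer k with 1 ≤ k ≤ n, one has the reflection identity A_{n,k}(s) = n^{-s} · (n!)^{-s} · A_{n, n+1-k}(-s), which reduces the study of the coefficients for parameter -s to that for parameter s. -/
open Finset Polynomial MeasureTheory Filter

/-!
Unfolding the recursion, `∑_{k ≤ n} Pₖˢ = ∏_{j=1}^{n} (1 + x / jˢ)`, so that
`Pₙ₊₁ˢ(x) = x / (n+1)ˢ · ∏_{j=1}^{n} (1 + x / jˢ)`. Reversing the coefficients of the product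
turns each factor `1 + x / jˢ` into `x + 1 / jˢ = j⁻ˢ (1 + jˢ x)`, i.e. into the factor for `-s`
up to the scalar `j⁻ˢ`; these scalars multiply to `(n!)⁻ˢ`.
-/

/-- The polynomials `Pₙˢ`, defined by `P₀ˢ = 1` and
`Pₙˢ(x) = (x / nˢ) · ∑_{k=0}^{n-1} Pₖˢ(x)` for `n ≥ 1`. -/
noncomputable def Pp (s : ℝ) : ℕ → Polynomial ℝ
  | 0 => 1
  | n + 1 => Polynomial.C ((((n + 1 : ℕ)) : ℝ) ^ s)⁻¹ * Polynomial.X *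
      ∑ k ∈ (Finset.range (n + 1)).attach, Pp s k.1
  decreasing_by exact Finset.mem_range.mp k.2

/-- `A_{n,k}(s)` : the coefficient of `x^k` in `Pₙˢ(x)`. -/
noncomputable def A (n k : ℕ) (s : ℝ) : ℝ := (Pp s n).coeff k

namespace Polynomial

section CommSemiring

variable {R : Type*} [CommSemiring R]

lemma natDegree_one_add_C_mul_X_le (a : R) : (1 + C a * X).natDegree ≤ 1 := by
  simpa only [add_comm, C_1] using natDegree_linear_le (a := a) (b := 1)

lemma natDegree_prod_one_add_C_mul_X_le {ι : Type*} (s : Finset ι) (a : ι → R) :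
    (∏ i ∈ s, (1 + C (a i) * X)).natDegree ≤ #s :=
  (natDegree_prod_le _ _).trans <| by
    simpa using Finset.sum_le_sum fun i (_ : i ∈ s) => natDegree_one_add_C_mul_X_le (a i)

end CommSemiring

variable {K : Type*} [Field K]

lemma reflect_one_add_C_mul_X {a : K} (ha : a ≠ 0) :
    reflect 1 (1 + C a * X) = C a * (1 + C a⁻¹ * X) := by
  rw [reflect_add, reflect_one, reflect_C_mul, reflect_one_X, mul_add, ← mul_assoc, ← C_mul,
    mul_inv_cancel₀ ha, C_1]
  ring

lemma reflect_prod_one_add_C_mul_X {ι : Type*} [DecidableEq ι] (s : Finset ι) {a : ι → K}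
    (ha : ∀ i ∈ s, a i ≠ 0) :
    reflect #s (∏ i ∈ s, (1 + C (a i) * X)) =
      C (∏ i ∈ s, a i) * ∏ i ∈ s, (1 + C (a i)⁻¹ * X) := by
  induction s using Finset.induction_on with
  | empty => simp
  | insert i s hi ih =>
    have ih := ih fun j hj => ha j (mem_insert_of_mem hj)
    rw [prod_insert hi, prod_insert hi, prod_insert hi, card_insert_of_notMem hi, add_comm,
      reflect_mul _ _ (natDegree_one_add_C_mul_X_le _) (natDegree_prod_one_add_C_mul_X_le s a),
      reflect_one_add_C_mul_X (ha i (mem_insert_self i s)), ih, C_mul]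
    ring

lemma coeff_prod_one_add_C_mul_X {ι : Type*} [DecidableEq ι] (s : Finset ι) {a : ι → K}
    (ha : ∀ i ∈ s, a i ≠ 0) {j : ℕ} (hj : j ≤ #s) :
    (∏ i ∈ s, (1 + C (a i) * X)).coeff j =
      (∏ i ∈ s, a i) * (∏ i ∈ s, (1 + C (a i)⁻¹ * X)).coeff (#s - j) := by
  rw [← coeff_C_mul, ← reflect_prod_one_add_C_mul_X s ha, coeff_reflect,
    revAt_le (Nat.sub_le _ _), Nat.sub_sub_self hj]

end Polynomial

noncomputable def Q (s : ℝ) (n : ℕ) : ℝ[X] :=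
  ∏ j ∈ range n, (1 + C ((((j + 1 : ℕ)) : ℝ) ^ s)⁻¹ * X)

lemma sum_range_succ_Pp (s : ℝ) (n : ℕ) : ∑ k ∈ range (n + 1), Pp s k = Q s n := by
  induction n with
  | zero => simp [Pp, Q]
  | succ n ih =>
    rw [sum_range_succ, ih, Pp, sum_attach (range (n + 1)) (Pp s), ih, Q, Q, prod_range_succ]
    ring

lemma Pp_succ (s : ℝ) (n : ℕ) :
    Pp s (n + 1) = C ((((n + 1 : ℕ)) : ℝ) ^ s)⁻¹ * X * Q s n := by
  rw [Pp, sum_attach (range (n + 1)) (Pp s), sum_range_succ_Pp]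

lemma A_succ_succ (s : ℝ) (n i : ℕ) :
    A (n + 1) (i + 1) s = ((((n + 1 : ℕ)) : ℝ) ^ s)⁻¹ * (Q s n).coeff i := by
  rw [A, Pp_succ, mul_assoc, coeff_C_mul, coeff_X_mul]

lemma prod_range_inv_rpow_succ (s : ℝ) (n : ℕ) :
    ∏ j ∈ range n, ((((j + 1 : ℕ)) : ℝ) ^ s)⁻¹ = ((n.factorial : ℝ) ^ s)⁻¹ := by
  rw [prod_inv_distrib, Real.finsetProd_rpow _ _ fun _ _ => by positivity,
    ← prod_range_add_one_eq_factorial, Nat.cast_prod]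

lemma coeff_Q (s : ℝ) {n j : ℕ} (hj : j ≤ n) :
    (Q s n).coeff j = ((n.factorial : ℝ) ^ s)⁻¹ * (Q (-s) n).coeff (n - j) := by
  have hQ : Q (-s) n = ∏ j ∈ range n, (1 + C ((((j + 1 : ℕ)) : ℝ) ^ s)⁻¹⁻¹ * X) := by
    simp only [Q, Real.rpow_neg (Nat.cast_nonneg _)]
  rw [hQ, ← prod_range_inv_rpow_succ, Q,
    coeff_prod_one_add_C_mul_X _ (fun _ _ => by positivity) (by simpa using hj), card_range]

theorem coeff_reflection_general (s : ℝ) (n : ℕ) (k : ℕ) (hk1 : 1 ≤ k)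
    (hk2 : k ≤ n) :
    A n k s = (n : ℝ) ^ (-s) * (n.factorial : ℝ) ^ (-s) * A n (n + 1 - k) (-s) := by
  obtain ⟨m, rfl⟩ : ∃ m, n = m + 1 := ⟨n - 1, by omega⟩
  obtain ⟨j, rfl⟩ : ∃ j, k = j + 1 := ⟨k - 1, by omega⟩
  have hpos : (0 : ℝ) < ((m + 1 : ℕ) : ℝ) := by positivity
  rw [show m + 1 + 1 - (j + 1) = m - j + 1 by omega, A_succ_succ, A_succ_succ,
    coeff_Q s (by omega : j ≤ m), Nat.factorial_succ, Nat.cast_mul,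
    Real.mul_rpow hpos.le (Nat.cast_nonneg _), Real.rpow_neg hpos.le,
    Real.rpow_neg (by positivity)]
  field_simp

/-- The reflection identity `A_{n,k}(s) = n^{-s} · (n!)^{-s} · A_{n,n+1-k}(-s)`. -/
theorem coeff_reflection (s : ℝ) (n : ℕ) (hn : 1 ≤ n) (k : ℕ) (hk1 : 1 ≤ k)
    (hk2 : k ≤ n) :
    A n k s = (n : ℝ) ^ (-s) * (n.factorial : ℝ) ^ (-s) * A n (n + 1 - k) (-s) :=
  coeff_reflection_general s n k hk1 hk2
end

section
/- Peak theorem: let n ≥ 6 be an integer, s ∈ (0,1), and suppose k₀ is a positive integer satisfying k₀ = 1 + ∑_{k=1}^{n-1} 1/(1+k^s). Then the sequence {A_{n,k}(s)}_{k=0}^{n} has a peak at k₀, i.e. A_{n,k₀}(s) > A_{n,k}(s) for every k ∈ {0,1,…,n} with k ≠ k₀. -/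
open Finset Polynomial MeasureTheory Filter

/-!
Unrolling the recursion gives `Pₙˢ(x) = (x / nˢ) ∏_{j=1}^{n-1} (1 + x / jˢ)`, and each factor is a
positive multiple of `1 - q_j + q_j x` with `q_j = 1 / (1 + jˢ)`. So `A_{n,k+1}(s)` is a positive
multiple of the probability that a sum of independent Bernoulli(`q_j`) variables equals `k`, and
the hypothesis on `k₀` says that this Poisson binomial distribution has integer mean `k₀ - 1`.
By Darroch's theorem such a distribution has its unique mode at its mean. The step just above the
mean comes from Hoeffding's extremal argument, the step just below from the reflection
`q ↦ 1 - q`, and log-concavity of the coefficients (Newton's inequalities) carries both steps on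
to the tails.
-/

theorem mul_le_mul_of_log_concave {a : ℕ → ℝ} {m : ℕ} (hlc : ∀ k, a k * a (k + 2) ≤ a (k + 1) ^ 2)
    (hpos : ∀ k ≤ m, 0 < a k) (hzero : ∀ k, m < k → a k = 0) (k : ℕ) :
    a k * a (k + 3) ≤ a (k + 1) * a (k + 2) := by
  have hnn : ∀ k, 0 ≤ a k := fun k => (le_or_gt k m).elim (fun h => (hpos k h).le)
    fun h => (hzero k h).ge
  by_cases hk : k + 3 ≤ m
  · have h12 : 0 < a (k + 1) * a (k + 2) := mul_pos (hpos _ (by omega)) (hpos _ (by omega))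
    refine le_of_mul_le_mul_right ?_ h12
    calc a k * a (k + 3) * (a (k + 1) * a (k + 2))
        = (a k * a (k + 2)) * (a (k + 1) * a (k + 3)) := by ring
      _ ≤ a (k + 1) ^ 2 * a (k + 2) ^ 2 :=
        mul_le_mul (hlc k) (hlc (k + 1)) (mul_nonneg (hnn _) (hnn _)) (sq_nonneg _)
      _ = a (k + 1) * a (k + 2) * (a (k + 1) * a (k + 2)) := by ring
  · rw [hzero (k + 3) (by omega), mul_zero]
    exact mul_nonneg (hnn _) (hnn _)

theorem lt_of_log_concave {a : ℕ → ℝ} {m K : ℕ} (hlc : ∀ k, a k * a (k + 2) ≤ a (k + 1) ^ 2)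
    (hpos : ∀ k ≤ m, 0 < a k) (hK : a (K + 1) < a K) {j : ℕ} (hKj : K < j) (hjm : j ≤ m) :
    a j < a K := by
  have hstep : ∀ n, K ≤ n → n + 1 ≤ m → a (n + 1) < a n := by
    intro n hn
    induction n, hn using Nat.le_induction with
    | base => exact fun _ => hK
    | succ n hKn ih =>
      intro hnm
      have h0 := hpos n (by omega)
      have h1 := hpos (n + 1) (by omega)
      have hdec := ih (by omega)
      nlinarith [hlc n]
  induction j, hKj using Nat.le_induction with
  | base => exact hK
  | succ j hKj ih => exact (hstep j (by omega) hjm).trans (ih (by omega))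

theorem IsCompact.exists_isMaxOn_isMaxOn_inter {X α β : Type*} [TopologicalSpace X]
    [TopologicalSpace α] [LinearOrder α] [OrderClosedTopology α]
    [TopologicalSpace β] [LinearOrder β] [OrderClosedTopology β]
    {S : Set X} (hS : IsCompact S) (hne : S.Nonempty) {F : X → α} {G : X → β}
    (hF : Continuous F) (hG : ContinuousOn G S) :
    ∃ a ∈ S, IsMaxOn F S a ∧ IsMaxOn G (S ∩ F ⁻¹' {F a}) a := by
  obtain ⟨b, hbS, hb⟩ := hS.exists_isMaxOn hne hF.continuousOn
  obtain ⟨a, ⟨haS, haF⟩, ha⟩ := (hS.inter_right (isClosed_singleton.preimage hF)).exists_isMaxOn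
    ⟨b, hbS, rfl⟩ (hG.mono Set.inter_subset_left)
  rw [Set.mem_preimage, Set.mem_singleton_iff] at haF
  exact ⟨a, haS, by rwa [isMaxOn_iff, haF], by rwa [haF]⟩

@[to_additive]
theorem prod_eq_mul_mul_prod_erase_erase {ι M : Type*} [DecidableEq ι] [CommMonoid M]
    {s : Finset ι} {i j : ι} (hi : i ∈ s) (hj : j ∈ s) (hij : i ≠ j) (f : ι → M) :
    ∏ l ∈ s, f l = f i * (f j * ∏ l ∈ (s.erase i).erase j, f l) := by
  rw [← mul_prod_erase s f hi, ← mul_prod_erase (s.erase i) f (mem_erase.2 ⟨hij.symm, hj⟩)]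

theorem coeff_linear_pow {x : ℝ} (hx : x ≠ 0) (r j : ℕ) :
    ((C (1 - x) + C x * X) ^ r).coeff j = x ^ r * (((1 - x) / x) ^ (r - j) * r.choose j) := by
  have h : C (1 - x) + C x * X = C x * (X + C ((1 - x) / x)) := by
    rw [mul_add, ← C_mul, mul_div_cancel₀ _ hx]
    ring
  rw [h, mul_pow, ← C_pow, coeff_C_mul, coeff_X_add_C_pow]

theorem coeff_succ_lt_coeff_linear_pow {x : ℝ} (hx : x ∈ Set.Ioo (0 : ℝ) 1) {r K : ℕ}
    (hK : r * x = K) :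
    ((C (1 - x) + C x * X) ^ r).coeff (K + 1) < ((C (1 - x) + C x * X) ^ r).coeff K := by
  obtain ⟨hx0, hx1⟩ := hx
  have hKr : K ≤ r := by
    have : (K : ℝ) ≤ r := by nlinarith [(Nat.cast_nonneg r : (0 : ℝ) ≤ r)]
    exact_mod_cast this
  have hchoose : (0 : ℝ) < r.choose K := by exact_mod_cast Nat.choose_pos hKr
  have hy : 0 < (1 - x) / x := div_pos (by linarith) hx0
  rw [coeff_linear_pow hx0.ne', coeff_linear_pow hx0.ne']
  refine mul_lt_mul_of_pos_left ?_ (pow_pos hx0 r)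
  by_cases hK1 : K + 1 ≤ r
  · rw [show r - K = r - (K + 1) + 1 by omega, pow_succ, mul_assoc]
    refine mul_lt_mul_of_pos_left ?_ (pow_pos hy _)
    have hrec : (r.choose (K + 1) : ℝ) * (K + 1) = r.choose K * (r - K) := by
      have := congrArg (Nat.cast (R := ℝ)) (Nat.choose_succ_right_eq r K)
      push_cast [Nat.cast_sub hKr] at this
      exact this
    rw [div_mul_eq_mul_div, lt_div_iff₀ hx0]
    refine lt_of_mul_lt_mul_right ?_ (by positivity : (0 : ℝ) ≤ K + 1)
    calc (r.choose (K + 1) : ℝ) * x * (K + 1) = r.choose K * (r * x - K * x) := by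
          rw [mul_right_comm, hrec]; ring
      _ = r.choose K * K * (1 - x) := by rw [hK]; ring
      _ < r.choose K * (K + 1) * (1 - x) := by gcongr; linarith
      _ = (1 - x) * r.choose K * (K + 1) := by ring
  · rw [Nat.choose_eq_zero_of_lt (by omega), Nat.cast_zero, mul_zero]
    positivity

section PoissonBinomial

variable {ι : Type*}

/-- The probability generating function of the number of successes in independent
Bernoulli(`p i`) trials, `i ∈ s`. -/
noncomputable def poissonBinomial (s : Finset ι) (p : ι → ℝ) : ℝ[X] :=
  ∏ i ∈ s, (C (1 - p i) + C (p i) * X)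

theorem poissonBinomial_insert [DecidableEq ι] {a : ι} {s : Finset ι} (ha : a ∉ s)
    (p : ι → ℝ) :
    poissonBinomial (insert a s) p = (C (1 - p a) + C (p a) * X) * poissonBinomial s p :=
  prod_insert ha

theorem coeff_zero_poissonBinomial_insert [DecidableEq ι] {a : ι} {s : Finset ι} (ha : a ∉ s)
    (p : ι → ℝ) :
    (poissonBinomial (insert a s) p).coeff 0 = (1 - p a) * (poissonBinomial s p).coeff 0 := by
  simp only [poissonBinomial_insert ha, add_mul, mul_assoc, coeff_add, coeff_C_mul,
    coeff_X_mul_zero, mul_zero, add_zero]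

theorem coeff_succ_poissonBinomial_insert [DecidableEq ι] {a : ι} {s : Finset ι} (ha : a ∉ s)
    (p : ι → ℝ) (k : ℕ) :
    (poissonBinomial (insert a s) p).coeff (k + 1) =
      (1 - p a) * (poissonBinomial s p).coeff (k + 1) + p a * (poissonBinomial s p).coeff k := by
  simp only [poissonBinomial_insert ha, add_mul, mul_assoc, coeff_add, coeff_C_mul, coeff_X_mul]

theorem poissonBinomial_congr {s : Finset ι} {p p' : ι → ℝ} (h : ∀ i ∈ s, p i = p' i) :
    poissonBinomial s p = poissonBinomial s p' :=
  prod_congr rfl fun i hi => by rw [h i hi]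

theorem natDegree_poissonBinomial_le (s : Finset ι) (p : ι → ℝ) :
    (poissonBinomial s p).natDegree ≤ #s := by
  refine (natDegree_prod_le _ _).trans ?_
  rw [card_eq_sum_ones]
  exact sum_le_sum fun i _ => by rw [add_comm]; exact natDegree_linear_le

theorem coeff_poissonBinomial_eq_zero {s : Finset ι} {p : ι → ℝ} {k : ℕ} (hk : #s < k) :
    (poissonBinomial s p).coeff k = 0 :=
  coeff_eq_zero_of_natDegree_lt ((natDegree_poissonBinomial_le s p).trans_lt hk)

theorem coeff_poissonBinomial_nonneg {s : Finset ι} {p : ι → ℝ}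
    (hp : ∀ i ∈ s, p i ∈ Set.Icc (0 : ℝ) 1) (k : ℕ) : 0 ≤ (poissonBinomial s p).coeff k := by
  classical
  induction s using Finset.induction_on generalizing k with
  | empty =>
    rw [poissonBinomial, prod_empty, coeff_one]
    split_ifs <;> norm_num
  | insert a s ha ih =>
    have ih' := ih fun i hi => hp i (mem_insert_of_mem hi)
    obtain ⟨h0, h1⟩ := hp a (mem_insert_self a s)
    rcases k with _ | k
    · rw [coeff_zero_poissonBinomial_insert ha]
      exact mul_nonneg (by linarith) (ih' 0)
    · rw [coeff_succ_poissonBinomial_insert ha]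
      exact add_nonneg (mul_nonneg (by linarith) (ih' _)) (mul_nonneg h0 (ih' k))

theorem coeff_poissonBinomial_pos {s : Finset ι} {p : ι → ℝ}
    (hp : ∀ i ∈ s, p i ∈ Set.Ioo (0 : ℝ) 1) {k : ℕ} (hk : k ≤ #s) :
    0 < (poissonBinomial s p).coeff k := by
  classical
  induction s using Finset.induction_on generalizing k with
  | empty => simp_all [poissonBinomial]
  | insert a s ha ih =>
    have hp' : ∀ i ∈ s, p i ∈ Set.Ioo (0 : ℝ) 1 := fun i hi => hp i (mem_insert_of_mem hi)
    obtain ⟨h0, h1⟩ := hp a (mem_insert_self a s)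
    rw [card_insert_of_notMem ha] at hk
    rcases k with _ | k
    · rw [coeff_zero_poissonBinomial_insert ha]
      exact mul_pos (by linarith) (ih hp' (Nat.zero_le _))
    · rw [coeff_succ_poissonBinomial_insert ha]
      have hnn := coeff_poissonBinomial_nonneg
        (fun i hi => Set.Ioo_subset_Icc_self (hp' i hi)) (k + 1)
      exact add_pos_of_nonneg_of_pos (mul_nonneg (by linarith) hnn)
        (mul_pos h0 (ih hp' (by omega)))

theorem coeff_poissonBinomial_mul_le_sq {s : Finset ι} {p : ι → ℝ}
    (hp : ∀ i ∈ s, p i ∈ Set.Ioo (0 : ℝ) 1) (k : ℕ) :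
    (poissonBinomial s p).coeff k * (poissonBinomial s p).coeff (k + 2) ≤
      (poissonBinomial s p).coeff (k + 1) ^ 2 := by
  classical
  induction s using Finset.induction_on generalizing k with
  | empty => simp [poissonBinomial, coeff_one]
  | insert a s ha ih =>
    have hp' : ∀ i ∈ s, p i ∈ Set.Ioo (0 : ℝ) 1 := fun i hi => hp i (mem_insert_of_mem hi)
    set b := fun k => (poissonBinomial s p).coeff k
    have hlc : ∀ k, b k * b (k + 2) ≤ b (k + 1) ^ 2 := ih hp'
    have hlc2 := mul_le_mul_of_log_concave hlc (fun k hk => coeff_poissonBinomial_pos hp' hk)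
      fun k hk => coeff_poissonBinomial_eq_zero hk
    have hnn : ∀ k, 0 ≤ b k := coeff_poissonBinomial_nonneg fun i hi =>
      Set.Ioo_subset_Icc_self (hp' i hi)
    obtain ⟨hv, hv1⟩ := hp a (mem_insert_self a s)
    have hu : 0 ≤ 1 - p a := by linarith
    rcases k with _ | k
    · rw [coeff_zero_poissonBinomial_insert ha, coeff_succ_poissonBinomial_insert ha,
        coeff_succ_poissonBinomial_insert ha]
      nlinarith [mul_nonneg (mul_nonneg hu hu) (sub_nonneg.2 (hlc 0)),
        mul_nonneg (mul_nonneg hu hv.le) (mul_nonneg (hnn 0) (hnn 1)),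
        mul_nonneg (mul_nonneg hv.le hv.le) (mul_nonneg (hnn 0) (hnn 0))]
    · rw [coeff_succ_poissonBinomial_insert ha, coeff_succ_poissonBinomial_insert ha,
        coeff_succ_poissonBinomial_insert ha]
      nlinarith [mul_nonneg (mul_nonneg hu hu) (sub_nonneg.2 (hlc (k + 1))),
        mul_nonneg (mul_nonneg hv.le hv.le) (sub_nonneg.2 (hlc k)),
        mul_nonneg (mul_nonneg hu hv.le) (sub_nonneg.2 (hlc2 k))]

theorem reflect_poissonBinomial (s : Finset ι) (p : ι → ℝ) :
    reflect #s (poissonBinomial s p) = poissonBinomial s (fun i => 1 - p i) := by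
  classical
  induction s using Finset.induction_on with
  | empty => simp [poissonBinomial]
  | insert a s ha ih =>
    have hlin : reflect 1 (C (1 - p a) + C (p a) * X) = C (1 - (1 - p a)) + C (1 - p a) * X := by
      simp only [map_sub, map_one, reflect_add, reflect_sub, reflect_one, pow_one, reflect_C,
        reflect_C_mul, reflect_one_X, mul_one, sub_sub_cancel]
      ring
    rw [poissonBinomial_insert ha, poissonBinomial_insert ha, card_insert_of_notMem ha, add_comm,
      reflect_mul _ _ (by rw [add_comm]; exact natDegree_linear_le)
        (natDegree_poissonBinomial_le s p), ih, hlin]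

theorem coeff_poissonBinomial_eq_coeff_one_sub {s : Finset ι} (p : ι → ℝ) {k : ℕ} (hk : k ≤ #s) :
    (poissonBinomial s p).coeff k = (poissonBinomial s (fun i => 1 - p i)).coeff (#s - k) := by
  rw [← reflect_poissonBinomial, coeff_reflect, revAt_le (Nat.sub_le _ _), Nat.sub_sub_self hk]

theorem continuous_coeff_poissonBinomial (s : Finset ι) (k : ℕ) :
    Continuous fun p : ι → ℝ => (poissonBinomial s p).coeff k := by
  classical
  suffices ∀ Q : ℝ[X], ∀ k, Continuous fun p : ι → ℝ => (Q * poissonBinomial s p).coeff k by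
    simpa using this 1 k
  induction s using Finset.induction_on with
  | empty => intro Q k; exact continuous_const
  | insert a s ha ih =>
    intro Q k
    have h (p : ι → ℝ) : (Q * poissonBinomial (insert a s) p).coeff k =
        (1 - p a) * (Q * poissonBinomial s p).coeff k +
          p a * (Q * X * poissonBinomial s p).coeff k := by
      rw [poissonBinomial_insert ha, ← coeff_C_mul, ← coeff_C_mul, ← coeff_add]
      congr 1
      ring
    simp_rw [h]
    exact ((continuous_const.sub (continuous_apply a)).mul (ih Q k)).add
      ((continuous_apply a).mul (ih (Q * X) k))

theorem poissonBinomial_eq_X_pow_mul_linear_pow {s : Finset ι} {p : ι → ℝ} {x : ℝ}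
    (hx : x ∈ Set.Ioo (0 : ℝ) 1) (hp : ∀ l ∈ s, p l = 0 ∨ p l = 1 ∨ p l = x) :
    poissonBinomial s p =
      X ^ #{l ∈ s | p l = 1} * (C (1 - x) + C x * X) ^ #{l ∈ s | p l = x} := by
  classical
  have hfactor : ∀ l ∈ s, C (1 - p l) + C (p l) * X =
      (if p l = 1 then X else 1) * (if p l = x then C (1 - x) + C x * X else 1) := by
    intro l hl
    rcases hp l hl with h | h | h
    · simp [h, hx.1.ne]
    · simp [h, hx.2.ne']
    · simp [h, hx.2.ne]
  rw [poissonBinomial, prod_congr rfl hfactor, prod_mul_distrib, prod_ite, prod_ite]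
  simp only [prod_const, one_pow, mul_one]

theorem sum_eq_card_add_card_mul {s : Finset ι} {p : ι → ℝ} {x : ℝ}
    (hx : x ∈ Set.Ioo (0 : ℝ) 1) (hp : ∀ l ∈ s, p l = 0 ∨ p l = 1 ∨ p l = x) :
    ∑ l ∈ s, p l = #{l ∈ s | p l = 1} + #{l ∈ s | p l = x} * x := by
  classical
  have hterm : ∀ l ∈ s, p l = (if p l = 1 then 1 else 0) + (if p l = x then x else 0) := by
    intro l hl
    rcases hp l hl with h | h | h
    · simp [h, hx.1.ne]
    · simp [h, hx.2.ne']
    · simp [h, hx.2.ne]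
  rw [sum_congr rfl hterm, sum_add_distrib, sum_ite, sum_ite]
  simp only [sum_const, smul_zero, add_zero, nsmul_eq_mul, mul_one]

theorem coeff_succ_lt_coeff_of_forall_eq_zero_or_eq_one_or_eq {s : Finset ι} {p : ι → ℝ}
    {x : ℝ} {K : ℕ} (hx : x ∈ Set.Ioo (0 : ℝ) 1) (hp : ∀ l ∈ s, p l = 0 ∨ p l = 1 ∨ p l = x)
    (hsum : ∑ l ∈ s, p l = K) :
    (poissonBinomial s p).coeff (K + 1) < (poissonBinomial s p).coeff K := by
  rw [sum_eq_card_add_card_mul hx hp] at hsum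
  rw [poissonBinomial_eq_X_pow_mul_linear_pow hx hp]
  set c := #{l ∈ s | p l = 1}
  set r := #{l ∈ s | p l = x}
  have hcK : c ≤ K := by
    have : (c : ℝ) ≤ K := by nlinarith [hx.1, (Nat.cast_nonneg r : (0 : ℝ) ≤ r)]
    exact_mod_cast this
  obtain ⟨K', rfl⟩ := Nat.exists_eq_add_of_le hcK
  rw [show c + K' + 1 = K' + 1 + c by ring, add_comm c K', coeff_X_pow_mul, coeff_X_pow_mul]
  exact coeff_succ_lt_coeff_linear_pow hx (by push_cast at hsum; linarith)

theorem le_card_of_sum_eq {s : Finset ι} {p : ι → ℝ} {K : ℕ} (hp : ∀ i ∈ s, p i ≤ 1)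
    (hsum : ∑ i ∈ s, p i = K) : K ≤ #s := by
  have : (K : ℝ) ≤ #s := by
    rw [← hsum, ← nsmul_one, ← sum_const]
    exact sum_le_sum hp
  exact_mod_cast this

end PoissonBinomial

section Transfer

variable {ι : Type*} [DecidableEq ι]

def transfer (p : ι → ℝ) (i j : ι) (x : ℝ) : ι → ℝ :=
  Function.update (Function.update p i x) j (p i + p j - x)

variable {p : ι → ℝ} {i j : ι}

theorem transfer_apply_left (hij : i ≠ j) (x : ℝ) : transfer p i j x i = x := by
  simp [transfer, hij]

theorem transfer_apply_right (x : ℝ) : transfer p i j x j = p i + p j - x := by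
  simp [transfer]

theorem transfer_apply_of_ne {l : ι} (hli : l ≠ i) (hlj : l ≠ j) (x : ℝ) :
    transfer p i j x l = p l := by
  simp [transfer, hli, hlj]

theorem transfer_self : transfer p i j (p i) = p := by
  simp [transfer]

theorem sum_comp_transfer {s : Finset ι} (hi : i ∈ s) (hj : j ∈ s) (hij : i ≠ j)
    (g : ℝ → ℝ) (x : ℝ) :
    ∑ l ∈ s, g (transfer p i j x l) =
      ∑ l ∈ s, g (p l) + (g x + g (p i + p j - x) - g (p i) - g (p j)) := by
  have hrest : ∑ l ∈ (s.erase i).erase j, g (transfer p i j x l) =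
      ∑ l ∈ (s.erase i).erase j, g (p l) := sum_congr rfl fun l hl => by
    rw [transfer_apply_of_ne (ne_of_mem_erase (mem_of_mem_erase hl)) (ne_of_mem_erase hl)]
  rw [sum_eq_add_add_sum_erase_erase hi hj hij, sum_eq_add_add_sum_erase_erase hi hj hij, hrest,
    transfer_apply_left hij, transfer_apply_right]
  ring

theorem exists_coeff_poissonBinomial_transfer {s : Finset ι} (hi : i ∈ s) (hj : j ∈ s)
    (hij : i ≠ j) (k : ℕ) :
    ∃ α β : ℝ, ∀ x, (poissonBinomial s (transfer p i j x)).coeff k =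
      α + β * (x * (p i + p j - x)) := by
  set Ψ := poissonBinomial ((s.erase i).erase j) p
  refine ⟨((C (1 - (p i + p j)) + C (p i + p j) * X) * Ψ).coeff k, ((1 - X) ^ 2 * Ψ).coeff k,
    fun x => ?_⟩
  have hrest : poissonBinomial ((s.erase i).erase j) (transfer p i j x) = Ψ :=
    poissonBinomial_congr fun l hl =>
      transfer_apply_of_ne (ne_of_mem_erase (mem_of_mem_erase hl)) (ne_of_mem_erase hl) x
  rw [poissonBinomial, prod_eq_mul_mul_prod_erase_erase hi hj hij, ← poissonBinomial, hrest,
    transfer_apply_left hij, transfer_apply_right, ← mul_assoc]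
  have hpair : (C (1 - x) + C x * X) * (C (1 - (p i + p j - x)) + C (p i + p j - x) * X) =
      C (1 - (p i + p j)) + C (p i + p j) * X + C (x * (p i + p j - x)) * (1 - X) ^ 2 := by
    simp only [map_sub, map_add, map_mul, map_one]
    ring
  rw [hpair, add_mul, coeff_add, mul_assoc, coeff_C_mul]
  ring

end Transfer

section MeanSlice

variable {ι : Type*}

def meanSlice (s : Finset ι) (K : ℝ) : Set (ι → ℝ) :=
  {p | (∀ i, p i ∈ Set.Icc (0 : ℝ) 1) ∧ ∑ i ∈ s, p i = K}

theorem isCompact_meanSlice (s : Finset ι) (K : ℝ) : IsCompact (meanSlice s K) := by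
  have hcube : IsCompact (Set.univ.pi fun _ : ι => Set.Icc (0 : ℝ) 1) :=
    isCompact_univ_pi fun _ => isCompact_Icc
  have hslice : meanSlice s K =
      Set.univ.pi (fun _ : ι => Set.Icc (0 : ℝ) 1) ∩ {p | ∑ i ∈ s, p i = K} := by
    ext p
    simp only [meanSlice, Set.mem_inter_iff, Set.mem_univ_pi, Set.mem_ofPred_eq]
  rw [hslice]
  exact hcube.inter_right (isClosed_eq (continuous_finsetSum s fun i _ => continuous_apply i)
    continuous_const)

theorem exists_forall_eq_zero_or_eq_one_or_eq
    {s : Finset ι} {p : ι → ℝ} (h01 : ∀ l ∈ s, p l ∈ Set.Icc (0 : ℝ) 1)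
    (heq : ∀ i ∈ s, ∀ j ∈ s, p i ∈ Set.Ioo (0 : ℝ) 1 → p j ∈ Set.Ioo (0 : ℝ) 1 → p i = p j) :
    ∃ x ∈ Set.Ioo (0 : ℝ) 1, ∀ l ∈ s, p l = 0 ∨ p l = 1 ∨ p l = x := by
  have hcases : ∀ l ∈ s, p l = 0 ∨ p l = 1 ∨ p l ∈ Set.Ioo (0 : ℝ) 1 := by
    intro l hl
    obtain ⟨h0, h1⟩ := h01 l hl
    rcases h0.eq_or_lt with h0 | h0
    · exact Or.inl h0.symm
    rcases h1.eq_or_lt with h1 | h1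
    · exact Or.inr (Or.inl h1)
    · exact Or.inr (Or.inr ⟨h0, h1⟩)
  by_cases hint : ∃ i ∈ s, p i ∈ Set.Ioo (0 : ℝ) 1
  · obtain ⟨i, hi, hpi⟩ := hint
    refine ⟨p i, hpi, fun l hl => ?_⟩
    rcases hcases l hl with h | h | h
    · exact Or.inl h
    · exact Or.inr (Or.inl h)
    · exact Or.inr (Or.inr (heq l hl i hi h hpi))
  · simp only [not_exists, not_and] at hint
    refine ⟨1 / 2, by norm_num, fun l hl => ?_⟩
    rcases hcases l hl with h | h | h
    · exact Or.inl h
    · exact Or.inr (Or.inl h)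
    · exact absurd h (hint l hl)

variable [DecidableEq ι] {s : Finset ι} {K : ℝ} {p : ι → ℝ} {i j : ι}

theorem transfer_mem_meanSlice (hp : p ∈ meanSlice s K) (hi : i ∈ s) (hj : j ∈ s) (hij : i ≠ j)
    {x : ℝ} (hx : x ∈ Set.Icc (0 : ℝ) 1) (hx' : p i + p j - x ∈ Set.Icc (0 : ℝ) 1) :
    transfer p i j x ∈ meanSlice s K := by
  refine ⟨fun l => ?_, ?_⟩
  · by_cases hli : l = i
    · rwa [hli, transfer_apply_left hij]
    by_cases hlj : l = j
    · rwa [hlj, transfer_apply_right]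
    rw [transfer_apply_of_ne hli hlj]
    exact hp.1 l
  · rw [← hp.2]
    simpa using sum_comp_transfer hi hj hij id x

theorem eq_of_isMaxOn_of_isMaxOn_sum_sq {F : (ι → ℝ) → ℝ} (hp : p ∈ meanSlice s K)
    (hF : IsMaxOn F (meanSlice s K) p)
    (hG : IsMaxOn (fun q => ∑ l ∈ s, q l ^ 2) (meanSlice s K ∩ F ⁻¹' {F p}) p)
    (hi : i ∈ s) (hj : j ∈ s) (hij : i ≠ j)
    (haff : ∃ α β : ℝ, ∀ x, F (transfer p i j x) = α + β * (x * (p i + p j - x)))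
    (hpi : p i ∈ Set.Ioo (0 : ℝ) 1) (hpj : p j ∈ Set.Ioo (0 : ℝ) 1) : p i = p j := by
  by_contra hne
  obtain ⟨α, β, hαβ⟩ := haff
  obtain ⟨hpi0, hpi1⟩ := hpi
  obtain ⟨hpj0, hpj1⟩ := hpj
  have hFp : F p = α + β * (p i * p j) := by simpa [transfer_self] using hαβ (p i)
  rcases lt_or_ge 0 β with hβ | hβ
  · -- moving both coordinates to their mean increases `xy`
    have hmem : transfer p i j ((p i + p j) / 2) ∈ meanSlice s K :=
      transfer_mem_meanSlice hp hi hj hij ⟨by positivity, by linarith⟩ ⟨by linarith, by linarith⟩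
    have hprod : p i * p j < (p i + p j) / 2 * (p i + p j - (p i + p j) / 2) := by
      nlinarith [sq_pos_of_ne_zero (sub_ne_zero.2 hne)]
    have hlt : F p < F (transfer p i j ((p i + p j) / 2)) := by
      rw [hFp, hαβ]
      nlinarith
    exact (hF hmem).not_gt hlt
  · -- pushing one coordinate to `0` or `1` decreases `xy`, hence does not decrease `F`
    obtain ⟨x, hx, hx', hprod⟩ : ∃ x ∈ Set.Icc (0 : ℝ) 1, p i + p j - x ∈ Set.Icc (0 : ℝ) 1 ∧
        x * (p i + p j - x) < p i * p j := by
      rcases le_total (p i + p j) 1 with h | h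
      · exact ⟨p i + p j, ⟨by linarith, h⟩, by simp, by nlinarith⟩
      · exact ⟨1, ⟨zero_le_one, le_rfl⟩, ⟨by linarith, by linarith⟩,
          by nlinarith [mul_pos (sub_pos.2 hpi1) (sub_pos.2 hpj1)]⟩
    have hmem := transfer_mem_meanSlice hp hi hj hij hx hx'
    have hFeq : F (transfer p i j x) = F p := by
      refine le_antisymm (hF hmem) ?_
      rw [hFp, hαβ]
      nlinarith
    have hGle : ∑ l ∈ s, transfer p i j x l ^ 2 ≤ ∑ l ∈ s, p l ^ 2 := hG ⟨hmem, hFeq⟩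
    have hGsum := sum_comp_transfer (p := p) hi hj hij (· ^ 2) x
    nlinarith

end MeanSlice

section Darroch

variable {ι : Type*}

/-- Hoeffding's extremal argument: a maximiser of `coeff (K + 1) - coeff K` on the slice, chosen
with the largest `∑ pₗ²`, has all its probabilities in `{0, 1, x}`, so it is a shifted binomial
distribution with mean `K`, for which the inequality is explicit. -/
theorem coeff_succ_lt_coeff_poissonBinomial_of_sum_eq {s : Finset ι} {p : ι → ℝ} {K : ℕ}
    (hp : ∀ i ∈ s, p i ∈ Set.Icc (0 : ℝ) 1) (hsum : ∑ i ∈ s, p i = K) :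
    (poissonBinomial s p).coeff (K + 1) < (poissonBinomial s p).coeff K := by
  classical
  set F : (ι → ℝ) → ℝ := fun q =>
    (poissonBinomial s q).coeff (K + 1) - (poissonBinomial s q).coeff K
  have hF : Continuous F :=
    (continuous_coeff_poissonBinomial s _).sub (continuous_coeff_poissonBinomial s _)
  set p' : ι → ℝ := fun i => if i ∈ s then p i else 0
  have hp's : ∀ i ∈ s, p' i = p i := fun i hi => if_pos hi
  have hp' : p' ∈ meanSlice s K := by
    refine ⟨fun i => ?_, by rw [sum_congr rfl hp's, hsum]⟩
    by_cases hi : i ∈ s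
    · rw [hp's i hi]; exact hp i hi
    · simp [p', hi]
  obtain ⟨p₀, hp₀, hF₀, hG₀⟩ := (isCompact_meanSlice s K).exists_isMaxOn_isMaxOn_inter ⟨p', hp'⟩
    hF (G := fun q => ∑ l ∈ s, q l ^ 2) (by fun_prop : Continuous _).continuousOn
  have haff : ∀ i ∈ s, ∀ j ∈ s, i ≠ j →
      ∃ α β : ℝ, ∀ x, F (transfer p₀ i j x) = α + β * (x * (p₀ i + p₀ j - x)) := by
    intro i hi j hj hij
    obtain ⟨α₁, β₁, h₁⟩ := exists_coeff_poissonBinomial_transfer (p := p₀) hi hj hij (K + 1)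
    obtain ⟨α₀, β₀, h₀⟩ := exists_coeff_poissonBinomial_transfer (p := p₀) hi hj hij K
    exact ⟨α₁ - α₀, β₁ - β₀, fun x => by simp only [F, h₁, h₀]; ring⟩
  obtain ⟨x, hx, hp₀x⟩ := exists_forall_eq_zero_or_eq_one_or_eq (fun l _ => hp₀.1 l)
    fun i hi j hj hpi hpj => (eq_or_ne i j).elim (congrArg p₀) fun hij =>
      eq_of_isMaxOn_of_isMaxOn_sum_sq hp₀ hF₀ hG₀ hi hj hij (haff i hi j hj hij) hpi hpj
  have hneg : F p₀ < 0 :=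
    sub_neg.2 (coeff_succ_lt_coeff_of_forall_eq_zero_or_eq_one_or_eq hx hp₀x hp₀.2)
  have hle : F p' ≤ F p₀ := hF₀ hp'
  simp only [F, poissonBinomial_congr hp's] at hle
  linarith

theorem coeff_lt_coeff_poissonBinomial_of_sum_eq_of_lt {s : Finset ι} {p : ι → ℝ} {K j : ℕ}
    (hp : ∀ i ∈ s, p i ∈ Set.Ioo (0 : ℝ) 1) (hsum : ∑ i ∈ s, p i = K) (hKj : K < j) :
    (poissonBinomial s p).coeff j < (poissonBinomial s p).coeff K := by
  have hKs := le_card_of_sum_eq (fun i hi => (hp i hi).2.le) hsum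
  rcases le_or_gt j #s with hjs | hjs
  · exact lt_of_log_concave (coeff_poissonBinomial_mul_le_sq hp)
      (fun k hk => coeff_poissonBinomial_pos hp hk)
      (coeff_succ_lt_coeff_poissonBinomial_of_sum_eq (fun i hi => Set.Ioo_subset_Icc_self (hp i hi))
        hsum) hKj hjs
  · rw [coeff_poissonBinomial_eq_zero hjs]
    exact coeff_poissonBinomial_pos hp hKs

theorem coeff_lt_coeff_poissonBinomial_of_sum_eq {s : Finset ι} {p : ι → ℝ} {K j : ℕ}
    (hp : ∀ i ∈ s, p i ∈ Set.Ioo (0 : ℝ) 1) (hsum : ∑ i ∈ s, p i = K) (hj : j ≠ K) :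
    (poissonBinomial s p).coeff j < (poissonBinomial s p).coeff K := by
  rcases hj.lt_or_gt with hjK | hKj
  · have hKs := le_card_of_sum_eq (fun i hi => (hp i hi).2.le) hsum
    have hsum' : ∑ i ∈ s, (1 - p i) = (#s - K : ℕ) := by
      rw [sum_sub_distrib, sum_const, hsum, Nat.cast_sub hKs, nsmul_one]
    rw [coeff_poissonBinomial_eq_coeff_one_sub p (by omega : j ≤ #s),
      coeff_poissonBinomial_eq_coeff_one_sub p hKs]
    exact coeff_lt_coeff_poissonBinomial_of_sum_eq_of_lt
      (fun i hi => ⟨by linarith [(hp i hi).2], by linarith [(hp i hi).1]⟩) hsum' (by omega)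
  · exact coeff_lt_coeff_poissonBinomial_of_sum_eq_of_lt hp hsum hKj

end Darroch

theorem sum_range_Pp (s : ℝ) (n : ℕ) :
    ∑ k ∈ range (n + 1), Pp s k = ∏ j ∈ Icc 1 n, (1 + C ((j : ℝ) ^ s)⁻¹ * X) := by
  induction n with
  | zero => simp [Pp]
  | succ n ih =>
    rw [sum_range_succ, ih, Pp, sum_attach (range (n + 1)) (Pp s), ih,
      ← insert_Icc_right_eq_Icc_add_one (by omega), prod_insert (by simp)]
    ring

theorem one_add_C_inv_mul_X {u : ℝ} (hu : 0 < u) :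
    1 + C u⁻¹ * X = C (1 + u⁻¹) * (C (1 - 1 / (1 + u)) + C (1 / (1 + u)) * X) := by
  have h₁ : (1 + u⁻¹) * (1 - 1 / (1 + u)) = 1 := by field_simp; ring
  have h₂ : (1 + u⁻¹) * (1 / (1 + u)) = u⁻¹ := by field_simp; ring
  rw [mul_add, ← C_mul, h₁, ← mul_assoc, ← C_mul, h₂, C_1]

theorem Pp_succ_eq (s : ℝ) (m : ℕ) :
    Pp s (m + 1) = C ((((m + 1 : ℕ)) : ℝ) ^ s)⁻¹ * C (∏ j ∈ Icc 1 m, (1 + ((j : ℝ) ^ s)⁻¹)) *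
      X * poissonBinomial (Icc 1 m) (fun j => 1 / (1 + (j : ℝ) ^ s)) := by
  have hfactor : ∀ j ∈ Icc 1 m, 1 + C ((j : ℝ) ^ s)⁻¹ * X =
      C (1 + ((j : ℝ) ^ s)⁻¹) * (C (1 - 1 / (1 + (j : ℝ) ^ s)) + C (1 / (1 + (j : ℝ) ^ s)) * X) :=
    fun j hj => one_add_C_inv_mul_X (Real.rpow_pos_of_pos (Nat.cast_pos.2 (mem_Icc.1 hj).1) s)
  rw [Pp, sum_attach (range (m + 1)) (Pp s), sum_range_Pp, prod_congr rfl hfactor,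
    prod_mul_distrib, ← map_prod, poissonBinomial]
  ring

theorem peak_theorem_general (n : ℕ) (hn : 6 ≤ n) (s : ℝ)
    (k0 : ℕ) (hk0 : 0 < k0)
    (heq : (k0 : ℝ) = 1 + ∑ k ∈ Finset.Icc 1 (n - 1), 1 / (1 + (k : ℝ) ^ s)) :
    ∀ k : ℕ, k ≤ n → k ≠ k0 → A n k s < A n k0 s := by
  obtain ⟨m, rfl⟩ : ∃ m, n = m + 1 := ⟨n - 1, by omega⟩
  obtain ⟨K, rfl⟩ : ∃ K, k0 = K + 1 := ⟨k0 - 1, by omega⟩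
  set q : ℕ → ℝ := fun j => 1 / (1 + (j : ℝ) ^ s)
  have hq : ∀ j ∈ Icc 1 m, q j ∈ Set.Ioo (0 : ℝ) 1 := by
    intro j hj
    have hu : 0 < (j : ℝ) ^ s := Real.rpow_pos_of_pos (Nat.cast_pos.2 (mem_Icc.1 hj).1) s
    exact ⟨by positivity, (div_lt_one (by positivity)).2 (by linarith)⟩
  have hsum : ∑ j ∈ Icc 1 m, q j = K := by
    rw [Nat.add_sub_cancel] at heq
    push_cast at heq
    linarith
  obtain ⟨κ, hκ, hPp⟩ : ∃ κ > 0, Pp s (m + 1) = C κ * X * poissonBinomial (Icc 1 m) q :=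
    ⟨(((m + 1 : ℕ) : ℝ) ^ s)⁻¹ * ∏ j ∈ Icc 1 m, (1 + ((j : ℝ) ^ s)⁻¹), by positivity,
      by rw [Pp_succ_eq, ← C_mul]⟩
  have hA : ∀ k, A (m + 1) (k + 1) s = κ * (poissonBinomial (Icc 1 m) q).coeff k := fun k => by
    rw [A, hPp, mul_assoc, coeff_C_mul, coeff_X_mul]
  intro k _ hk
  rcases k with _ | k
  · rw [A, hPp, mul_assoc, coeff_C_mul, coeff_X_mul_zero, mul_zero, hA]
    exact mul_pos hκ (coeff_poissonBinomial_pos hq (le_card_of_sum_eq (fun j hj => (hq j hj).2.le)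
      hsum))
  · rw [hA, hA]
    exact mul_lt_mul_of_pos_left (coeff_lt_coeff_poissonBinomial_of_sum_eq hq hsum (by omega)) hκ

/-- Peak theorem: if `n ≥ 6`, `s ∈ (0,1)` and `k₀ = 1 + ∑_{k=1}^{n-1} 1/(1+kˢ)` is a
positive integer, then `{A_{n,k}(s)}ₖ` has a peak at `k₀`. -/
theorem peak_theorem (n : ℕ) (hn : 6 ≤ n) (s : ℝ) (hs : s ∈ Set.Ioo (0 : ℝ) 1)
    (k0 : ℕ) (hk0 : 0 < k0)
    (heq : (k0 : ℝ) = 1 + ∑ k ∈ Finset.Icc 1 (n - 1), 1 / (1 + (k : ℝ) ^ s)) :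
    ∀ k : ℕ, k ≤ n → k ≠ k0 → A n k s < A n k0 s :=
  peak_theorem_general n hn s k0 hk0 heq
end

section
/- There exist infinitely many integers n ≥ 3 such that the sequence of unsigned Stirling numbers of the first kind {c(n,k)}_{k=0}^{n} has exactly one mode, i.e. there is a unique index k₀ with c(n,k₀) ≥ c(n,k) for all k ∈ {0,…,n}. -/
/-!
Placing the point `0` of `Fin (n + 1)` either as a new fixed point or right before one of the
other `n` points in its cycle gives `c(n+1, k+1) = n c(n, k+1) + c(n, k)`, so `c(n, k)` is
`Nat.stirlingFirst n k`. Along this recurrence `k ↦ c(n, k)` stays strictly log-concave, hence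
it strictly increases, takes its maximum at one index or at two consecutive ones, and then
strictly decreases: the mode is unique unless two consecutive values are equal.
This cannot happen for both `n` and `n + 1`. In
`c(n+1, j+2) - c(n+1, j+1) = n (c(n, j+2) - c(n, j+1)) + (c(n, j+1) - c(n, j))`
the differences of `c(n, ·)` are positive before a plateau, zero on it and negative after it,
so the two on the right have the same sign and do not both vanish.
-/

open Finset Polynomial MeasureTheory Filter

/-- The number of cycles (orbits, including fixed points) of a permutation of `Fin n`. -/
noncomputable def cycleCount (n : ℕ) (σ : Equiv.Perm (Fin n)) : ℕ :=
  σ.cycleType.card + (n - σ.support.card)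

/-- The unsigned Stirling number of the first kind: the number of permutations of an
`n`-element set with exactly `k` cycles. -/
noncomputable def stirling1 (n k : ℕ) : ℕ :=
  Nat.card {σ : Equiv.Perm (Fin n) // cycleCount n σ = k}

open Equiv

namespace Equiv.Perm

variable {α : Type*} [DecidableEq α] [Fintype α]

theorem card_parts_partition (σ : Perm α) :
    σ.partition.parts.card = σ.cycleType.card + (Fintype.card α - #σ.support) := by
  simp [parts_partition]

theorem IsCycle.swap_mul_of_apply_eq_self {c : Perm α} (hc : c.IsCycle) {a b : α}
    (ha : c a = a) (hb : b ∈ c.support) :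
    (swap a b * c).IsCycle ∧ (swap a b * c).support = insert a c.support := by
  obtain ⟨k, hk⟩ : ∃ k, (c.cycleOf b).support.card = k + 1 :=
    Nat.exists_eq_add_one.2 (card_pos.2 ⟨b, mem_support_cycleOf_iff.2 ⟨.refl _ _, hb⟩⟩)
  have hlist : c.toList b = b :: List.iterate c (c b) k := by rw [toList, hk]; rfl
  have hc_eq : (c.toList b).formPerm = c := by
    rw [formPerm_toList, hc.cycleOf_eq (mem_support.1 hb)]
  have ha_notMem : a ∉ c.toList b := fun h =>
    (mem_support.1 ((mem_toList_iff.1 h).1.mem_support_iff.1 hb)) ha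
  have hnodup : (a :: c.toList b).Nodup := List.nodup_cons.2 ⟨ha_notMem, nodup_toList c b⟩
  have hlen : 2 ≤ (c.toList b).length := two_le_length_toList_iff_mem_support.2 hb
  have hswap : swap a b * c = (a :: c.toList b).formPerm := by
    rw [hlist, List.formPerm_cons_cons, ← hlist, hc_eq]
  rw [hswap]
  refine ⟨List.isCycle_formPerm hnodup (by rw [List.length_cons]; omega), ?_⟩
  rw [List.support_formPerm_of_nodup _ hnodup (by simp [hlist]), List.toFinset_cons,
    ← List.support_formPerm_of_nodup _ (nodup_toList c b) (toList_ne_singleton c b), hc_eq]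

theorem disjoint_swap_left_iff {τ : Perm α} {a b : α} (hab : a ≠ b) :
    (swap a b).Disjoint τ ↔ a ∉ τ.support ∧ b ∉ τ.support := by
  rw [disjoint_iff_disjoint_support, support_swap hab, disjoint_insert_left,
    disjoint_singleton_left]

theorem card_parts_partition_swap_mul_of_notMem_support {τ : Perm α} {a b : α} (hab : a ≠ b)
    (ha : a ∉ τ.support) (hb : b ∉ τ.support) :
    (swap a b * τ).partition.parts.card + 1 = τ.partition.parts.card := by
  have hd := (disjoint_swap_left_iff hab).2 ⟨ha, hb⟩
  have hle := card_le_univ (swap a b * τ).support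
  rw [hd.card_support_mul, card_support_swap hab] at hle
  rw [card_parts_partition, card_parts_partition, hd.cycleType_mul, hd.card_support_mul,
    (isCycle_swap hab).cycleType, card_support_swap hab, Multiset.card_add,
    Multiset.card_singleton]
  omega

/-- With `c` the cycle of `b`, `swap a b * τ = (τ * c⁻¹) * (swap a b * c)`, and `swap a b * c` is
the cycle `c` with `a` inserted: one cycle gets longer, none is added. -/
theorem card_parts_partition_swap_mul_of_mem_support {τ : Perm α} {a b : α}
    (ha : a ∉ τ.support) (hb : b ∈ τ.support) :
    (swap a b * τ).partition.parts.card + 1 = τ.partition.parts.card := by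
  set c := τ.cycleOf b
  set ρ := τ * c⁻¹
  have hab : a ≠ b := by rintro rfl; exact ha hb
  have hc : c.IsCycle := isCycle_cycleOf τ (mem_support.1 hb)
  have hca : c a = a := by simpa [c, cycleOf_apply] using fun _ => notMem_support.1 ha
  have hcb : b ∈ c.support := mem_support_cycleOf_iff.2 ⟨.refl _ _, hb⟩
  obtain ⟨hd, hd_support⟩ := hc.swap_mul_of_apply_eq_self hca hcb
  have hρc : ρ.Disjoint c :=
    disjoint_mul_inv_of_mem_cycleFactorsFinset (cycleOf_mem_cycleFactorsFinset_iff.2 hb)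
  have hτ : τ = ρ * c := by simp [ρ]
  have hτ_support : τ.support = ρ.support ∪ c.support := hτ ▸ hρc.support_mul
  have ha_ρ : a ∉ ρ.support := fun h => ha (hτ_support ▸ mem_union_left _ h)
  have ha_c : a ∉ c.support := fun h => ha (hτ_support ▸ mem_union_right _ h)
  have hb_ρ : b ∉ ρ.support := disjoint_right.1 (disjoint_iff_disjoint_support.1 hρc) hcb
  have hρd : ρ.Disjoint (swap a b * c) := by
    rw [disjoint_iff_disjoint_support, hd_support, disjoint_insert_right]
    exact ⟨ha_ρ, disjoint_iff_disjoint_support.1 hρc⟩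
  have hswap : swap a b * τ = ρ * (swap a b * c) := by
    rw [← mul_assoc, ← ((disjoint_swap_left_iff hab).2 ⟨ha_ρ, hb_ρ⟩).commute.eq, mul_assoc,
      ← hτ]
  have hcycleType : (swap a b * τ).cycleType.card = τ.cycleType.card := by
    rw [hswap, hτ, hρd.cycleType_mul, hρc.cycleType_mul, hd.cycleType, hc.cycleType]
    simp
  have hsupport : #(swap a b * τ).support = #τ.support + 1 := by
    rw [hswap, hτ, hρd.card_support_mul, hρc.card_support_mul, hd_support,
      card_insert_of_notMem ha_c, add_assoc]
  have hle := card_le_univ (swap a b * τ).support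
  rw [card_parts_partition, card_parts_partition, hcycleType, hsupport]
  omega

theorem card_parts_partition_swap_mul {τ : Perm α} {a b : α} (ha : τ a = a) (hab : a ≠ b) :
    (swap a b * τ).partition.parts.card + 1 = τ.partition.parts.card := by
  by_cases hb : b ∈ τ.support
  · exact card_parts_partition_swap_mul_of_mem_support (notMem_support.2 ha) hb
  · exact card_parts_partition_swap_mul_of_notMem_support hab (notMem_support.2 ha) hb

theorem card_parts_partition_extendDomain {β : Type*} [DecidableEq β] [Fintype β]
    {p : β → Prop} [DecidablePred p] (f : α ≃ Subtype p) (σ : Perm α) :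
    (σ.extendDomain f).partition.parts.card =
      σ.partition.parts.card + (Fintype.card β - Fintype.card α) := by
  have h₁ := card_le_univ σ.support
  have h₂ : Fintype.card α ≤ Fintype.card β :=
    (Fintype.card_congr f).trans_le (Fintype.card_subtype_le p)
  simp only [card_parts_partition, cycleType_extendDomain, card_support_extend_domain]
  omega

theorem decomposeFin_symm_zero {n : ℕ} (e : Perm (Fin n)) :
    decomposeFin.symm (0, e) = e.extendDomain (finSuccAboveEquiv 0) := by
  ext x
  cases x using Fin.cases with
  | zero => rw [extendDomain_apply_not_subtype _ _ (by simp)]; simp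
  | succ x =>
    have hx : x.succ = (finSuccAboveEquiv 0 x : Fin (n + 1)) := by simp [finSuccAboveEquiv_apply]
    rw [hx, extendDomain_apply_image]
    simp [decomposeFin_symm_apply_succ, finSuccAboveEquiv_apply]

theorem decomposeFin_symm_eq_swap_mul {n : ℕ} (p : Fin (n + 1)) (e : Perm (Fin n)) :
    decomposeFin.symm (p, e) = swap 0 p * decomposeFin.symm (0, e) := by
  ext x
  cases x using Fin.cases with
  | zero => simp
  | succ x => simp [decomposeFin_symm_apply_succ]

theorem card_parts_partition_decomposeFin_symm {n : ℕ} (p : Fin (n + 1)) (e : Perm (Fin n)) :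
    (decomposeFin.symm (p, e)).partition.parts.card =
      e.partition.parts.card + if p = 0 then 1 else 0 := by
  have h₀ : (decomposeFin.symm (0, e)).partition.parts.card = e.partition.parts.card + 1 := by
    simp [decomposeFin_symm_zero, card_parts_partition_extendDomain]
  split_ifs with hp
  · rw [hp, h₀]
  · have := card_parts_partition_swap_mul (decomposeFin_symm_apply_zero 0 e) (Ne.symm hp)
    rw [← decomposeFin_symm_eq_swap_mul] at this
    omega

end Equiv.Perm

open Perm

theorem cycleCount_eq_card_parts_partition {n : ℕ} (σ : Perm (Fin n)) :
    cycleCount n σ = σ.partition.parts.card := by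
  simp [cycleCount, card_parts_partition]

theorem stirling1_zero_left (k : ℕ) : stirling1 0 k = if k = 0 then 1 else 0 := by
  have h (σ : Perm (Fin 0)) : cycleCount 0 σ = 0 := by
    simp [cycleCount, Subsingleton.elim σ 1]
  split_ifs with hk <;> simp [stirling1, h, hk, eq_comm]

theorem stirling1_succ_zero (n : ℕ) : stirling1 (n + 1) 0 = 0 := by
  have h (σ : Perm (Fin (n + 1))) : cycleCount (n + 1) σ ≠ 0 := by
    rw [cycleCount_eq_card_parts_partition, Ne, Multiset.card_eq_zero]
    intro h0
    simpa [h0] using σ.partition.parts_sum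
  simp [stirling1, h]

theorem stirling1_succ_succ (n k : ℕ) :
    stirling1 (n + 1) (k + 1) = n * stirling1 n (k + 1) + stirling1 n k := by
  let e : {σ : Perm (Fin (n + 1)) // cycleCount (n + 1) σ = k + 1} ≃
      Σ p : Fin (n + 1), {e : Perm (Fin n) // cycleCount n e + (if p = 0 then 1 else 0) = k + 1} :=
    (decomposeFin.symm.subtypeEquiv fun ⟨p, e⟩ => by
      simp only [cycleCount_eq_card_parts_partition, card_parts_partition_decomposeFin_symm]).symm
      |>.trans (subtypeProdEquivSigmaSubtype _)
  rw [stirling1, Nat.card_congr e, Nat.card_sigma, Fin.sum_univ_succ]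
  simp [stirling1, Fin.succ_ne_zero, add_comm]

theorem stirling1_eq_stirlingFirst : ∀ n k, stirling1 n k = Nat.stirlingFirst n k
  | 0, k => by cases k <;> simp [stirling1_zero_left]
  | n + 1, 0 => stirling1_succ_zero n
  | n + 1, k + 1 => by
    rw [stirling1_succ_succ, Nat.stirlingFirst_succ_succ, stirling1_eq_stirlingFirst n (k + 1),
      stirling1_eq_stirlingFirst n k]

theorem Nat.lt_of_mul_lt_sq_of_le {x y z : ℕ} (h : x * z < y ^ 2) (hyx : y ≤ x) : z < y :=
  Nat.lt_of_mul_lt_mul_left (h.trans_le (by rw [sq]; exact Nat.mul_le_mul_right y hyx))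

theorem Nat.mul_lt_mul_of_mul_lt_sq {w x y z : ℕ} (h₁ : w * y < x ^ 2) (h₂ : x * z < y ^ 2) :
    w * z < x * y := by
  refine Nat.lt_of_mul_lt_mul_right (a := x * y) ?_
  calc w * z * (x * y) = (w * y) * (x * z) := by ring
    _ < x ^ 2 * y ^ 2 := Nat.mul_lt_mul'' h₁ h₂
    _ = x * y * (x * y) := by ring

theorem Nat.mul_add_mul_add_lt_sq {c x₀ x₁ x₂ x₃ : ℕ} (h₀ : x₀ * x₂ < x₁ ^ 2)
    (h₁ : x₁ * x₃ ≤ x₂ ^ 2) (h : x₀ * x₃ ≤ x₁ * x₂) :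
    (c * x₁ + x₀) * (c * x₃ + x₂) < (c * x₂ + x₁) ^ 2 := by
  nlinarith [Nat.mul_le_mul_left (c * c) h₁, Nat.mul_le_mul_left c h]

/-- Strict log-concavity of `a 0, a 1, …, a (n + 1)` (the last term included). -/
def IsStrictLogConcaveUpTo (a : ℕ → ℕ) (n : ℕ) : Prop :=
  ∀ i < n, a i * a (i + 2) < a (i + 1) ^ 2

namespace IsStrictLogConcaveUpTo

variable {a : ℕ → ℕ} {n : ℕ}

theorem succ_lt_of_succ_le (h : IsStrictLogConcaveUpTo a n) {i j : ℕ} (hi : a (i + 1) ≤ a i)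
    (hij : i < j) (hjn : j ≤ n) : a (j + 1) < a j := by
  induction j, hij using Nat.le_induction with
  | base => exact Nat.lt_of_mul_lt_sq_of_le (h i (by omega)) hi
  | succ j hij ih => exact Nat.lt_of_mul_lt_sq_of_le (h j (by omega)) (ih (by omega)).le

theorem lt_succ_of_le_succ (h : IsStrictLogConcaveUpTo a n) {i k : ℕ} (hk : a k ≤ a (k + 1))
    (hik : i < k) (hkn : k ≤ n) : a i < a (i + 1) := by
  by_contra! hi
  exact (h.succ_lt_of_succ_le hi hik hkn).not_ge hk

theorem eq_of_forall_le (h : IsStrictLogConcaveUpTo a n) (hne : ∀ k < n, a k ≠ a (k + 1))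
    {k₁ k₂ : ℕ} (hk₁ : k₁ ≤ n) (hk₂ : k₂ ≤ n) (h₁ : ∀ j, j ≤ n → a j ≤ a k₁)
    (h₂ : ∀ j, j ≤ n → a j ≤ a k₂) : k₁ = k₂ := by
  wlog hle : k₁ ≤ k₂ generalizing k₁ k₂
  · exact (this hk₂ hk₁ h₂ h₁ (by omega)).symm
  obtain rfl | hlt := hle.eq_or_lt
  · rfl
  obtain ⟨m, rfl⟩ : ∃ m, k₂ = m + 1 := ⟨k₂ - 1, by omega⟩
  obtain hlt | rfl := (Nat.lt_succ_iff.1 hlt).lt_or_eq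
  · exact absurd (h₁ _ (by omega)) (h.lt_succ_of_le_succ (h₂ m (by omega)) hlt (by omega)).not_ge
  · exact absurd ((h₂ k₁ (by omega)).antisymm (h₁ _ hk₂)) (hne k₁ (by omega))

theorem existsUnique_isMax (h : IsStrictLogConcaveUpTo a n) (hne : ∀ k < n, a k ≠ a (k + 1)) :
    ∃! k, k ≤ n ∧ ∀ j, j ≤ n → a j ≤ a k := by
  obtain ⟨k, hk, hmax⟩ := (range (n + 1)).exists_max_image a ⟨0, by simp⟩
  have hkn : k ≤ n := Nat.lt_succ_iff.1 (mem_range.1 hk)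
  have hmax' : ∀ j, j ≤ n → a j ≤ a k := fun j hj => hmax j (mem_range.2 (by omega))
  exact ⟨k, ⟨hkn, hmax'⟩, fun k' ⟨hk'n, hk'⟩ => h.eq_of_forall_le hne hk'n hkn hk' hmax'⟩

end IsStrictLogConcaveUpTo

namespace Nat

theorem stirlingFirst_isStrictLogConcaveUpTo :
    ∀ n, IsStrictLogConcaveUpTo (stirlingFirst n) n
  | 0 => fun _ hi => absurd hi (Nat.not_lt_zero _)
  | n + 1 => by
    intro i hi
    have ih := stirlingFirst_isStrictLogConcaveUpTo n
    cases i with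
    | zero => simpa [stirlingFirst_one_right] using pow_pos (Nat.factorial_pos n) 2
    | succ m =>
      rcases (Nat.succ_le_of_lt (Nat.lt_of_succ_lt_succ hi)).eq_or_lt with rfl | hmn
      · rw [stirlingFirst_eq_zero_of_lt (by omega : m + 1 + 1 < m + 1 + 2), stirlingFirst_self]
        simp
      · simp only [stirlingFirst_succ_succ]
        exact mul_add_mul_add_lt_sq (ih m (by omega)) (ih (m + 1) hmn).le
          (mul_lt_mul_of_mul_lt_sq (ih m (by omega)) (ih (m + 1) hmn)).le

theorem stirlingFirst_succ_ne_succ {n k : ℕ} (hk : k < n)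
    (heq : stirlingFirst n k = stirlingFirst n (k + 1)) {j : ℕ} (hj : j < n + 1) :
    stirlingFirst (n + 1) j ≠ stirlingFirst (n + 1) (j + 1) := by
  have h := stirlingFirst_isStrictLogConcaveUpTo n
  cases j with
  | zero => simpa [stirlingFirst_one_right] using (Nat.factorial_pos n).ne
  | succ m =>
    show n * stirlingFirst n (m + 1) + stirlingFirst n m ≠
      n * stirlingFirst n (m + 2) + stirlingFirst n (m + 1)
    rcases lt_or_ge m k with hmk | hkm
    · have h₁ : stirlingFirst n m < stirlingFirst n (m + 1) :=
        h.lt_succ_of_le_succ heq.le hmk hk.le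
      have h₂ : stirlingFirst n (m + 1) ≤ stirlingFirst n (m + 2) := by
        rcases (Nat.succ_le_of_lt hmk).eq_or_lt with rfl | hlt
        exacts [heq.le, (h.lt_succ_of_le_succ heq.le hlt hk.le).le]
      have := Nat.mul_le_mul_left n h₂
      omega
    · have h₁ : stirlingFirst n (m + 1) ≤ stirlingFirst n m := by
        rcases hkm.eq_or_lt with rfl | hlt
        exacts [heq.ge, (h.succ_lt_of_succ_le heq.ge hlt (by omega)).le]
      have h₂ : stirlingFirst n (m + 2) < stirlingFirst n (m + 1) :=
        h.succ_lt_of_succ_le heq.ge (by omega) (by omega)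
      have := Nat.mul_lt_mul_of_pos_left h₂ (by omega : 0 < n)
      omega

end Nat

/-- There are infinitely many `n ≥ 3` for which the unsigned Stirling numbers of the first
kind `{c(n,k)}_{k=0}^n` have exactly one mode. -/
theorem stirling_one_mode_infinitely_often :
    {n : ℕ | 3 ≤ n ∧
      ∃! k0 : ℕ, k0 ≤ n ∧ ∀ k : ℕ, k ≤ n → stirling1 n k ≤ stirling1 n k0}.Infinite := by
  have hunique : ∀ n, 3 ≤ n → (∀ k < n, Nat.stirlingFirst n k ≠ Nat.stirlingFirst n (k + 1)) →
      3 ≤ n ∧ ∃! k0 : ℕ, k0 ≤ n ∧ ∀ k : ℕ, k ≤ n → stirling1 n k ≤ stirling1 n k0 := by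
    intro n hn hne
    simp only [stirling1_eq_stirlingFirst]
    exact ⟨hn, (Nat.stirlingFirst_isStrictLogConcaveUpTo n).existsUnique_isMax hne⟩
  refine Set.infinite_of_forall_exists_gt fun a => ?_
  by_cases h : ∀ k < a + 3, Nat.stirlingFirst (a + 3) k ≠ Nat.stirlingFirst (a + 3) (k + 1)
  · exact ⟨a + 3, hunique _ (by omega) h, by omega⟩
  · push Not at h
    obtain ⟨k, hk, heq⟩ := h
    exact ⟨a + 4, hunique _ (by omega) fun j hj => Nat.stirlingFirst_succ_ne_succ hk heq hj,
      by omega⟩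
end
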